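/- (Asymptotics of the Pearcey-like integral, eq. (asy)) As θ → ∞, 𝒫(θ) = √(4π/θ) ( 1 + 7/(6θ) + O(θ^{-2}) ), where 𝒫(θ) := ∫_{-∞}^{∞} exp( -θ( y²/4 + y³/6 + y⁴/24 ) ) dy. -/

import Mathlib

/-!
With `s = θ^(-1/2)` and `y = s u`, `𝒫(θ) = s ∫ exp(-(u²/4 + s u³/6 + s² u⁴/24)) du`.
Averaging over `u ↦ -u` replaces `exp(-c)` by `cosh c`, where `c = s u³/6` and `a = s² u⁴/24`,
and the Taylor bounds for `exp` and `cosh` control `exp(-a) cosh c - (1 - a + c²/2)` by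
`c⁴ exp(-a) cosh c + a² + a c²`, all of order `s⁴`. By AM-GM `|c| ≤ a + u²/6`, so against the
weight `exp(-u²/4)` the error stays below `s⁴ (u⁸ + u¹⁰ + u¹²) exp(-u²/12)` and integrates to
`O(s⁴)`, while the Gaussian moments `∫ u⁴ e^{-u²/4} = 24√π`, `∫ u⁶ e^{-u²/4} = 240√π` turn the
main term into `2√π (1 + 7 s²/6)`.
-/

open MeasureTheory Real Filter Asymptotics

/-- The Pearcey-like integral `𝒫(θ) = ∫_ℝ exp(-θ(y²/4 + y³/6 + y⁴/24)) dy`. -/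
noncomputable def Pearcey (θ : ℝ) : ℝ :=
  ∫ y : ℝ, Real.exp (-θ * (y^2/4 + y^3/6 + y^4/24))

lemma cosh_sub_one_sub_sq_div_two_nonneg_and_le (x : ℝ) :
    0 ≤ cosh x - 1 - x ^ 2 / 2 ∧ cosh x - 1 - x ^ 2 / 2 ≤ x ^ 4 / 24 * cosh x := by
  have tail := (hasSum_nat_add_iff' 2).2 (hasSum_cosh x)
  norm_num [Finset.sum_range_succ, ← sub_sub] at tail
  refine ⟨tail.nonneg fun n => div_nonneg ((even_two_mul _).pow_nonneg x) (by positivity),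
    hasSum_le (fun n => ?_) tail ((hasSum_cosh x).mul_left (x ^ 4 / 24))⟩
  have hfac : ((2 * n).factorial * 24 : ℝ) ≤ (2 * (n + 2)).factorial := by
    exact_mod_cast Nat.le_of_dvd (Nat.factorial_pos _)
      (Nat.factorial_mul_factorial_dvd_factorial_add (2 * n) 4)
  calc x ^ (2 * (n + 2)) / (2 * (n + 2)).factorial
      ≤ x ^ (2 * (n + 2)) / ((2 * n).factorial * 24) :=
        div_le_div_of_nonneg_left ((even_two_mul _).pow_nonneg x) (by positivity) hfac
    _ = x ^ 4 / 24 * (x ^ (2 * n) / (2 * n).factorial) := by ring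

lemma cosh_le_exp_abs (x : ℝ) : cosh x ≤ exp |x| := by
  rw [cosh_eq]
  linarith [exp_le_exp.2 (le_abs_self x), exp_le_exp.2 (neg_le_abs x)]

lemma exp_neg_sub_one_add_le_sq {a : ℝ} (ha : 0 ≤ a) : exp (-a) - 1 + a ≤ a ^ 2 := by
  have h : exp (-a) * (1 + a) ≤ 1 := by
    calc exp (-a) * (1 + a) ≤ exp (-a) * exp a := by gcongr; linarith [add_one_le_exp a]
      _ = 1 := by rw [← exp_add, neg_add_cancel, exp_zero]
  nlinarith [one_sub_le_exp_neg a]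

lemma abs_exp_neg_mul_cosh_sub_le {a : ℝ} (ha : 0 ≤ a) (c : ℝ) :
    |exp (-a) * cosh c - (1 - a + c ^ 2 / 2)|
      ≤ c ^ 4 / 24 * (exp (-a) * cosh c) + a ^ 2 + a * c ^ 2 / 2 := by
  obtain ⟨hcosh₀, hcosh₁⟩ := cosh_sub_one_sub_sq_div_two_nonneg_and_le c
  have hexp₀ : 1 - a ≤ exp (-a) := one_sub_le_exp_neg a
  have hexp₁ : exp (-a) ≤ 1 := exp_le_one_iff.2 (neg_nonpos.2 ha)
  have hexp₂ := exp_neg_sub_one_add_le_sq ha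
  have hc2 : 0 ≤ c ^ 2 / 2 := by positivity
  have key : exp (-a) * cosh c - (1 - a + c ^ 2 / 2)
      = exp (-a) * (cosh c - 1 - c ^ 2 / 2) + (exp (-a) - 1 + a)
        + (exp (-a) - 1) * (c ^ 2 / 2) := by ring
  rw [key, abs_le]
  constructor
  · have : 0 ≤ c ^ 4 / 24 * (exp (-a) * cosh c) := by positivity
    nlinarith [mul_nonneg (exp_pos (-a)).le hcosh₀, mul_le_mul_of_nonneg_right hexp₀ hc2]
  · nlinarith [mul_le_mul_of_nonneg_left hcosh₁ (exp_pos (-a)).le,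
      mul_le_mul_of_nonneg_right hexp₁ hc2]

lemma integrable_pow_mul_exp_neg_mul_sq (n : ℕ) {b : ℝ} (hb : 0 < b) :
    Integrable fun x : ℝ => x ^ n * exp (-b * x ^ 2) := by
  simpa only [rpow_natCast] using
    integrable_rpow_mul_exp_neg_mul_sq hb (s := n) (by linarith [n.cast_nonneg (α := ℝ)])

lemma integral_pow_add_two_mul_exp_neg_mul_sq (n : ℕ) {b : ℝ} (hb : 0 < b) :
    2 * b * ∫ x : ℝ, x ^ (n + 2) * exp (-b * x ^ 2)
      = (n + 1) * ∫ x : ℝ, x ^ n * exp (-b * x ^ 2) := by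
  have hn := (integrable_pow_mul_exp_neg_mul_sq n hb).const_mul (n + 1)
  have hn2 := (integrable_pow_mul_exp_neg_mul_sq (n + 2) hb).const_mul (2 * b)
  have parts := integral_eq_zero_of_hasDerivAt_of_integrable
    (f := fun x : ℝ => x ^ (n + 1) * exp (-b * x ^ 2))
    (f' := fun x => (n + 1) * (x ^ n * exp (-b * x ^ 2))
      - 2 * b * (x ^ (n + 2) * exp (-b * x ^ 2)))
    (fun x => ((hasDerivAt_pow (n + 1) x).mul
      ((hasDerivAt_pow 2 x).const_mul (-b)).exp).congr_deriv (by push_cast; ring))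
    (hn.sub hn2) (integrable_pow_mul_exp_neg_mul_sq (n + 1) hb)
  rw [integral_sub hn hn2, integral_const_mul, integral_const_mul] at parts
  linarith

lemma integral_exp_neg_sq_div_four_mul_poly (s : ℝ) :
    ∫ u : ℝ, exp (-(1 / 4) * u ^ 2) * (1 - s ^ 2 * u ^ 4 / 24 + s ^ 2 * u ^ 6 / 72)
      = 2 * √π * (1 + 7 * s ^ 2 / 6) := by
  have hb : (0 : ℝ) < 1 / 4 := by norm_num
  have m₀ : ∫ u : ℝ, exp (-(1 / 4) * u ^ 2) = 2 * √π := by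
    rw [integral_gaussian, show π / (1 / 4) = 2 ^ 2 * π by ring, sqrt_mul' _ pi_pos.le,
      sqrt_sq zero_le_two]
  have m₂ := integral_pow_add_two_mul_exp_neg_mul_sq 0 hb
  have m₄ := integral_pow_add_two_mul_exp_neg_mul_sq 2 hb
  have m₆ := integral_pow_add_two_mul_exp_neg_mul_sq 4 hb
  simp only [zero_add, pow_zero, one_mul, Nat.cast_zero, Nat.cast_ofNat, Nat.reduceAdd]
    at m₂ m₄ m₆
  have i₀ := integrable_exp_neg_mul_sq hb
  have i₄ := (integrable_pow_mul_exp_neg_mul_sq 4 hb).const_mul (s ^ 2 / 24)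
  have i₆ := (integrable_pow_mul_exp_neg_mul_sq 6 hb).const_mul (s ^ 2 / 72)
  have expand :
      (fun u : ℝ => exp (-(1 / 4) * u ^ 2) * (1 - s ^ 2 * u ^ 4 / 24 + s ^ 2 * u ^ 6 / 72))
        = fun u => exp (-(1 / 4) * u ^ 2) - s ^ 2 / 24 * (u ^ 4 * exp (-(1 / 4) * u ^ 2))
        + s ^ 2 / 72 * (u ^ 6 * exp (-(1 / 4) * u ^ 2)) := by
    ext u; ring
  rw [expand, integral_add ?_ i₆, integral_sub i₀ i₄, integral_const_mul,
    integral_const_mul]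
  · linear_combination m₀ + s ^ 2 * (m₆ / 36 + 7 * m₄ / 36 + 7 * m₂ / 6 + 7 * m₀ / 6)
  · exact i₀.sub i₄

noncomputable def rescaledPearcey (s : ℝ) : ℝ :=
  ∫ u : ℝ, exp (-(u ^ 2 / 4 + s * u ^ 3 / 6 + s ^ 2 * u ^ 4 / 24))

lemma abs_mul_pow_three_div_six_le (s u : ℝ) :
    |s * u ^ 3 / 6| ≤ s ^ 2 * u ^ 4 / 24 + u ^ 2 / 6 := by
  rw [abs_le]
  constructor <;> nlinarith [sq_nonneg (s * u ^ 2 + 2 * u), sq_nonneg (s * u ^ 2 - 2 * u)]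

lemma exp_neg_mul_cosh_le_exp_neg_mul_sq (s u : ℝ) :
    exp (-(1 / 4) * u ^ 2) * (exp (-(s ^ 2 * u ^ 4 / 24)) * cosh (s * u ^ 3 / 6))
      ≤ exp (-(1 / 12) * u ^ 2) := by
  calc exp (-(1 / 4) * u ^ 2) * (exp (-(s ^ 2 * u ^ 4 / 24)) * cosh (s * u ^ 3 / 6))
      ≤ exp (-(1 / 4) * u ^ 2) * (exp (-(s ^ 2 * u ^ 4 / 24)) * exp |s * u ^ 3 / 6|) := by
        gcongr; exact cosh_le_exp_abs _
    _ = exp (-(1 / 4) * u ^ 2 - s ^ 2 * u ^ 4 / 24 + |s * u ^ 3 / 6|) := by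
        rw [exp_add, sub_eq_add_neg, exp_add, mul_assoc]
    _ ≤ exp (-(1 / 12) * u ^ 2) := exp_le_exp.2 (by linarith [abs_mul_pow_three_div_six_le s u])

lemma integrable_rescaledPearcey_integrand (s : ℝ) :
    Integrable fun u : ℝ => exp (-(u ^ 2 / 4 + s * u ^ 3 / 6 + s ^ 2 * u ^ 4 / 24)) := by
  refine (integrable_exp_neg_mul_sq (by norm_num : (0 : ℝ) < 1 / 12)).mono'
    (by fun_prop) (ae_of_all _ fun u => ?_)
  rw [norm_of_nonneg (exp_pos _).le, exp_le_exp]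
  linarith [neg_abs_le (s * u ^ 3 / 6), abs_mul_pow_three_div_six_le s u]

lemma rescaledPearcey_neg (s : ℝ) : rescaledPearcey (-s) = rescaledPearcey s := by
  rw [rescaledPearcey, ← integral_neg_eq_self]
  congr 1 with u
  ring_nf

lemma rescaledPearcey_eq_integral_cosh (s : ℝ) :
    rescaledPearcey s
      = ∫ u : ℝ,
          exp (-(1 / 4) * u ^ 2) * (exp (-(s ^ 2 * u ^ 4 / 24)) * cosh (s * u ^ 3 / 6)) := by
  have hsum : rescaledPearcey s + rescaledPearcey (-s) = 2 * ∫ u : ℝ,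
      exp (-(1 / 4) * u ^ 2) * (exp (-(s ^ 2 * u ^ 4 / 24)) * cosh (s * u ^ 3 / 6)) := by
    rw [rescaledPearcey, rescaledPearcey, ← integral_add (integrable_rescaledPearcey_integrand s)
      (integrable_rescaledPearcey_integrand (-s)), ← integral_const_mul]
    congr 1 with u
    have e₁ : -(u ^ 2 / 4 + s * u ^ 3 / 6 + s ^ 2 * u ^ 4 / 24)
        = -(1 / 4) * u ^ 2 + -(s ^ 2 * u ^ 4 / 24) + -(s * u ^ 3 / 6) := by ring
    have e₂ : -(u ^ 2 / 4 + -s * u ^ 3 / 6 + (-s) ^ 2 * u ^ 4 / 24)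
        = -(1 / 4) * u ^ 2 + -(s ^ 2 * u ^ 4 / 24) + s * u ^ 3 / 6 := by ring
    rw [e₁, e₂, cosh_eq, exp_add, exp_add, exp_add, exp_add]
    ring
  rw [rescaledPearcey_neg] at hsum
  linarith

lemma abs_exp_neg_mul_cosh_sub_poly_le (s u : ℝ) :
    |exp (-(1 / 4) * u ^ 2) * (exp (-(s ^ 2 * u ^ 4 / 24)) * cosh (s * u ^ 3 / 6))
      - exp (-(1 / 4) * u ^ 2) * (1 - s ^ 2 * u ^ 4 / 24 + s ^ 2 * u ^ 6 / 72)|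
      ≤ s ^ 4 * ((u ^ 8 + u ^ 10 + u ^ 12) * exp (-(1 / 12) * u ^ 2)) := by
  set a := s ^ 2 * u ^ 4 / 24
  set c := s * u ^ 3 / 6
  have hc : s ^ 2 * u ^ 6 / 72 = c ^ 2 / 2 := by ring
  have ha : 0 ≤ a := by positivity
  have hgauss : exp (-(1 / 4) * u ^ 2) ≤ exp (-(1 / 12) * u ^ 2) :=
    exp_le_exp.2 (by nlinarith [sq_nonneg u])
  have hcoef : c ^ 4 / 24 + a ^ 2 + a * c ^ 2 / 2 ≤ s ^ 4 * (u ^ 8 + u ^ 10 + u ^ 12) := by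
    have h₈ : 0 ≤ s ^ 4 * u ^ 8 := by positivity
    have h₁₀ : 0 ≤ s ^ 4 * u ^ 10 := by positivity
    have h₁₂ : 0 ≤ s ^ 4 * u ^ 12 := by positivity
    linear_combination (575 / 576) * h₈ + (1727 / 1728) * h₁₀ + (31103 / 31104) * h₁₂
  rw [hc, ← mul_sub, abs_mul, abs_of_pos (exp_pos _)]
  calc exp (-(1 / 4) * u ^ 2) * |exp (-a) * cosh c - (1 - a + c ^ 2 / 2)|
      ≤ exp (-(1 / 4) * u ^ 2) * (c ^ 4 / 24 * (exp (-a) * cosh c) + a ^ 2 + a * c ^ 2 / 2) := by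
        gcongr; exact abs_exp_neg_mul_cosh_sub_le ha c
    _ = c ^ 4 / 24 * (exp (-(1 / 4) * u ^ 2) * (exp (-a) * cosh c))
        + exp (-(1 / 4) * u ^ 2) * (a ^ 2 + a * c ^ 2 / 2) := by ring
    _ ≤ c ^ 4 / 24 * exp (-(1 / 12) * u ^ 2)
        + exp (-(1 / 12) * u ^ 2) * (a ^ 2 + a * c ^ 2 / 2) := by
        gcongr
        exact exp_neg_mul_cosh_le_exp_neg_mul_sq s u
    _ ≤ s ^ 4 * ((u ^ 8 + u ^ 10 + u ^ 12) * exp (-(1 / 12) * u ^ 2)) := by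
        linear_combination mul_le_mul_of_nonneg_right hcoef (exp_pos (-(1 / 12) * u ^ 2)).le

lemma exists_abs_rescaledPearcey_sub_le :
    ∃ C, ∀ s, |rescaledPearcey s - 2 * √π * (1 + 7 * s ^ 2 / 6)| ≤ C * s ^ 4 := by
  have hb : (0 : ℝ) < 1 / 12 := by norm_num
  have hweight : Integrable fun u : ℝ => (u ^ 8 + u ^ 10 + u ^ 12) * exp (-(1 / 12) * u ^ 2) := by
    simp only [add_mul]
    exact ((integrable_pow_mul_exp_neg_mul_sq 8 hb).add
      (integrable_pow_mul_exp_neg_mul_sq 10 hb)).add (integrable_pow_mul_exp_neg_mul_sq 12 hb)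
  refine ⟨∫ u : ℝ, (u ^ 8 + u ^ 10 + u ^ 12) * exp (-(1 / 12) * u ^ 2), fun s => ?_⟩
  have hcosh : Integrable fun u : ℝ =>
      exp (-(1 / 4) * u ^ 2) * (exp (-(s ^ 2 * u ^ 4 / 24)) * cosh (s * u ^ 3 / 6)) :=
    (integrable_exp_neg_mul_sq hb).mono' (by fun_prop) (ae_of_all _ fun u => by
        rw [norm_of_nonneg (by positivity)]; exact exp_neg_mul_cosh_le_exp_neg_mul_sq s u)
  have hpoly : Integrable fun u : ℝ =>
      exp (-(1 / 4) * u ^ 2) * (1 - s ^ 2 * u ^ 4 / 24 + s ^ 2 * u ^ 6 / 72) := by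
    have hb₄ : (0 : ℝ) < 1 / 4 := by norm_num
    refine (((integrable_exp_neg_mul_sq hb₄).sub
      ((integrable_pow_mul_exp_neg_mul_sq 4 hb₄).const_mul (s ^ 2 / 24))).add
      ((integrable_pow_mul_exp_neg_mul_sq 6 hb₄).const_mul (s ^ 2 / 72))).congr
      (ae_of_all _ fun u => ?_)
    simp only [Pi.add_apply, Pi.sub_apply]
    ring
  rw [rescaledPearcey_eq_integral_cosh, ← integral_exp_neg_sq_div_four_mul_poly,
    ← integral_sub hcosh hpoly, mul_comm, ← integral_const_mul, ← norm_eq_abs]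
  exact norm_integral_le_of_norm_le (hweight.const_mul _)
    (ae_of_all _ fun u => abs_exp_neg_mul_cosh_sub_poly_le s u)

lemma Pearcey_eq_mul_rescaledPearcey {θ : ℝ} (hθ : 0 < θ) :
    Pearcey θ = (√θ)⁻¹ * rescaledPearcey (√θ)⁻¹ := by
  have h := Measure.integral_comp_inv_mul_left
    (fun y : ℝ => exp (-θ * (y ^ 2 / 4 + y ^ 3 / 6 + y ^ 4 / 24))) √θ
  set s := (√θ)⁻¹
  have hθs : θ * s ^ 2 = 1 := by rw [inv_pow, sq_sqrt hθ.le, mul_inv_cancel₀ hθ.ne']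
  have hscale : ∀ u : ℝ, -θ * ((s * u) ^ 2 / 4 + (s * u) ^ 3 / 6 + (s * u) ^ 4 / 24)
      = -(u ^ 2 / 4 + s * u ^ 3 / 6 + s ^ 2 * u ^ 4 / 24) := fun u => by
    linear_combination (-(u ^ 2 / 4) - s * u ^ 3 / 6 - s ^ 2 * u ^ 4 / 24) * hθs
  simp only [hscale, abs_of_pos (sqrt_pos.2 hθ), smul_eq_mul] at h
  rw [rescaledPearcey, h, Pearcey, inv_mul_cancel_left₀ (sqrt_pos.2 hθ).ne']

/-- **eq. (asy).** Asymptotics of the Pearcey-like integral: as `θ → ∞`,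
`𝒫(θ) = √(4π/θ)(1 + 7/(6θ) + O(θ⁻²))`. -/
theorem stmt_14 :
    (fun θ : ℝ => Pearcey θ - Real.sqrt (4 * Real.pi / θ) * (1 + 7 / (6 * θ)))
      =O[Filter.atTop] (fun θ : ℝ => Real.sqrt (4 * Real.pi / θ) * θ ^ (-(2:ℝ))) := by
  obtain ⟨C, hC⟩ := exists_abs_rescaledPearcey_sub_le
  refine IsBigO.of_bound (C / (2 * √π)) ?_
  filter_upwards [eventually_gt_atTop 0] with θ hθ
  set s := (√θ)⁻¹
  have hs : 0 < s := inv_pos.2 (sqrt_pos.2 hθ)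
  have hs2 : θ⁻¹ = s ^ 2 := by rw [inv_pow, sq_sqrt hθ.le]
  have hsqrt : √(4 * π / θ) = 2 * √π * s := by
    rw [div_eq_mul_inv, sqrt_mul (by positivity), sqrt_mul zero_le_four, sqrt_inv,
      show (4 : ℝ) = 2 ^ 2 by norm_num, sqrt_sq zero_le_two]
  have hpow : θ ^ (-(2 : ℝ)) = s ^ 4 := by
    rw [rpow_neg hθ.le, rpow_two, ← inv_pow, hs2, ← pow_mul]
  have hdiff : Pearcey θ - 2 * √π * s * (1 + 7 / (6 * θ))
      = s * (rescaledPearcey s - 2 * √π * (1 + 7 * s ^ 2 / 6)) := by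
    rw [Pearcey_eq_mul_rescaledPearcey hθ, div_mul_eq_div_div, div_eq_mul_inv _ θ, hs2]
    ring
  rw [hsqrt, hpow, hdiff, norm_eq_abs, norm_eq_abs, abs_mul, abs_of_pos hs,
    abs_of_pos (show 0 < 2 * √π * s * s ^ 4 by positivity)]
  calc s * |rescaledPearcey s - 2 * √π * (1 + 7 * s ^ 2 / 6)| ≤ s * (C * s ^ 4) := by
        gcongr; exact hC s
    _ = C / (2 * √π) * (2 * √π * s * s ^ 4) := by
        field_simp
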